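/- Cut admissibility, negative principal case: if Γ and U are suspension-normal, U is stable, Γ ; · ⊢ A⁻ is derivable, and Γ ; [A⁻] ⊢ U is derivable, then Γ ; · ⊢ U is derivable in the focused sequent calculus for polarized intuitionistic logic. -/

import Mathlib

namespace StructuralFocalization

/- Polarized propositional intuitionistic logic -/
mutual
inductive PProp : Type
  | atom : Nat → PProp
  | down : NProp → PProp
  | bot  : PProp
  | or   : PProp → PProp → PProp
  | top  : PProp
  | and  : PProp → PProp → PProp
inductive NProp : Type
  | atom : Nat → NProp
  | up   : PProp → NProp
  | imp  : PProp → NProp → NProp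
  | top  : NProp
  | and  : NProp → NProp → NProp
end

/- Hypotheses: negative propositions or suspended positives ⟨A⁺⟩ -/
inductive Hyp : Type
  | neg  : NProp → Hyp
  | susp : PProp → Hyp

/- Succedents: A⁺, A⁻, or suspended ⟨A⁻⟩ -/
inductive Succ : Type
  | pos  : PProp → Succ
  | neg  : NProp → Succ
  | susp : NProp → Succ

abbrev Ctx := List Hyp

def Succ.stable : Succ → Prop
  | .pos _ => True
  | .susp _ => True
  | .neg _ => False

def Hyp.suspNormal : Hyp → Prop
  | .susp (PProp.atom _) => True
  | .susp _ => False
  | .neg _ => True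

def Ctx.suspNormal (Γ : Ctx) : Prop := ∀ h ∈ Γ, h.suspNormal

def Succ.suspNormal : Succ → Prop
  | .susp (NProp.atom _) => True
  | .susp _ => False
  | _ => True

/- The focused sequent calculus (Figures 3 and 4 of "Structural focalization",
   with the generalized id⁺/id⁻ rules for arbitrary suspended propositions). -/
mutual
/-- Right focus: Γ ⊢ [A⁺] -/
inductive RFoc : Ctx → PProp → Prop
  | idP {Γ A} : Hyp.susp A ∈ Γ → RFoc Γ A
  | downR {Γ A} : Inv Γ [] (Succ.neg A) → RFoc Γ (PProp.down A)
  | orR1 {Γ A B} : RFoc Γ A → RFoc Γ (PProp.or A B)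
  | orR2 {Γ A B} : RFoc Γ B → RFoc Γ (PProp.or A B)
  | topR {Γ} : RFoc Γ PProp.top
  | andR {Γ A B} : RFoc Γ A → RFoc Γ B → RFoc Γ (PProp.and A B)
/-- Inversion: Γ ; Ω ⊢ U -/
inductive Inv : Ctx → List PProp → Succ → Prop
  | focR {Γ A} : RFoc Γ A → Inv Γ [] (Succ.pos A)
  | focL {Γ A U} : Hyp.neg A ∈ Γ → Succ.stable U → LFoc Γ A U → Inv Γ [] U
  | etaP {Γ p Ω U} : Inv (Hyp.susp (PProp.atom p) :: Γ) Ω U → Inv Γ (PProp.atom p :: Ω) U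
  | downL {Γ A Ω U} : Inv (Hyp.neg A :: Γ) Ω U → Inv Γ (PProp.down A :: Ω) U
  | botL {Γ Ω U} : Inv Γ (PProp.bot :: Ω) U
  | orL {Γ A B Ω U} : Inv Γ (A :: Ω) U → Inv Γ (B :: Ω) U → Inv Γ (PProp.or A B :: Ω) U
  | topPL {Γ Ω U} : Inv Γ Ω U → Inv Γ (PProp.top :: Ω) U
  | andPL {Γ A B Ω U} : Inv Γ (A :: B :: Ω) U → Inv Γ (PProp.and A B :: Ω) U
  | etaN {Γ p} : Inv Γ [] (Succ.susp (NProp.atom p)) → Inv Γ [] (Succ.neg (NProp.atom p))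
  | upR {Γ A} : Inv Γ [] (Succ.pos A) → Inv Γ [] (Succ.neg (NProp.up A))
  | impR {Γ A B} : Inv Γ [A] (Succ.neg B) → Inv Γ [] (Succ.neg (NProp.imp A B))
  | topNR {Γ} : Inv Γ [] (Succ.neg NProp.top)
  | andNR {Γ A B} : Inv Γ [] (Succ.neg A) → Inv Γ [] (Succ.neg B) →
      Inv Γ [] (Succ.neg (NProp.and A B))
/-- Left focus: Γ ; [A⁻] ⊢ U -/
inductive LFoc : Ctx → NProp → Succ → Prop
  | idN {Γ A} : LFoc Γ A (Succ.susp A)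
  | upL {Γ A U} : Inv Γ [A] U → LFoc Γ (NProp.up A) U
  | impL {Γ A B U} : RFoc Γ A → LFoc Γ B U → LFoc Γ (NProp.imp A B) U
  | andL1 {Γ A B U} : LFoc Γ A U → LFoc Γ (NProp.and A B) U
  | andL2 {Γ A B U} : LFoc Γ B U → LFoc Γ (NProp.and A B) U
end

/- Unpolarized propositions and Kleene's G3 -/
inductive UProp : Type
  | atom : Nat → UProp
  | bot  : UProp
  | or   : UProp → UProp → UProp
  | top  : UProp
  | and  : UProp → UProp → UProp
  | imp  : UProp → UProp → UProp

inductive G3 : List UProp → UProp → Prop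
  | init {Γ p} : UProp.atom p ∈ Γ → G3 Γ (UProp.atom p)
  | botL {Γ Q} : UProp.bot ∈ Γ → G3 Γ Q
  | orR1 {Γ A B} : G3 Γ A → G3 Γ (UProp.or A B)
  | orR2 {Γ A B} : G3 Γ B → G3 Γ (UProp.or A B)
  | orL {Γ A B Q} : UProp.or A B ∈ Γ → G3 (A :: Γ) Q → G3 (B :: Γ) Q → G3 Γ Q
  | topR {Γ} : G3 Γ UProp.top
  | andR {Γ A B} : G3 Γ A → G3 Γ B → G3 Γ (UProp.and A B)
  | andL1 {Γ A B Q} : UProp.and A B ∈ Γ → G3 (A :: Γ) Q → G3 Γ Q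
  | andL2 {Γ A B Q} : UProp.and A B ∈ Γ → G3 (B :: Γ) Q → G3 Γ Q
  | impR {Γ A B} : G3 (A :: Γ) B → G3 Γ (UProp.imp A B)
  | impL {Γ A B Q} : UProp.imp A B ∈ Γ → G3 Γ A → G3 (B :: Γ) Q → G3 Γ Q

/-- G3 with an ordered auxiliary context Ψ: Γ; Ψ ⊢ Q -/
inductive G3Psi : List UProp → List UProp → UProp → Prop
  | cons {Γ P Ψ Q} : G3Psi (P :: Γ) Ψ Q → G3Psi Γ (P :: Ψ) Q
  | nil {Γ Q} : G3 Γ Q → G3Psi Γ [] Q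

/- Erasure -/
mutual
def eraseP : PProp → UProp
  | .atom p => .atom p
  | .down A => eraseN A
  | .bot => .bot
  | .or A B => .or (eraseP A) (eraseP B)
  | .top => .top
  | .and A B => .and (eraseP A) (eraseP B)
def eraseN : NProp → UProp
  | .atom p => .atom p
  | .up A => eraseP A
  | .imp A B => .imp (eraseP A) (eraseN B)
  | .top => .top
  | .and A B => .and (eraseN A) (eraseN B)
end

def eraseHyp : Hyp → UProp
  | .neg A => eraseN A
  | .susp A => eraseP A

def eraseCtx (Γ : Ctx) : List UProp := Γ.map eraseHyp

def eraseSucc : Succ → UProp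
  | .pos A => eraseP A
  | .neg A => eraseN A
  | .susp A => eraseN A

/-!
Both principal cuts are proved together by structural recursion on the cut formula. At `↓B`
the cut reduces to the right commutative cut, which carries the derivation of `B⁻` up to the
left focus steps on the hypothesis `B⁻` and applies the negative principal cut at `B` there;
dually, at `↑B` the left commutative cut carries the right focus on `B⁺` down to the `focR`
leaves, where the positive principal cut at `B` applies. Suspension-normality makes the
identity cases trivial: a suspended `⟨A⁺⟩` in the context or `⟨A⁻⟩` on the right is atomic,
so it is only ever consumed by an `η` rule.
-/

theorem Ctx.suspNormal.cons {h : Hyp} {Γ : Ctx} (hh : h.suspNormal) (hΓ : Γ.suspNormal) :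
    Ctx.suspNormal (h :: Γ) := by
  simpa [Ctx.suspNormal] using ⟨hh, hΓ⟩

theorem Ctx.suspNormal.exists_atom_of_susp_mem {Γ : Ctx} {A : PProp} (hΓ : Γ.suspNormal)
    (hm : Hyp.susp A ∈ Γ) : ∃ p, A = .atom p := by
  have := hΓ _ hm
  cases A <;> simp_all [Hyp.suspNormal]

theorem Succ.suspNormal.exists_atom {A : NProp} (hU : (Succ.susp A).suspNormal) :
    ∃ p, A = .atom p := by
  cases A <;> simp_all [Succ.suspNormal]

theorem cons_subset_cons_swap {α : Type*} {x y : α} {l l' : List α} (h : l ⊆ y :: l') :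
    x :: l ⊆ y :: x :: l' :=
  List.cons_subset.2
    ⟨by simp, List.Subset.trans h (List.cons_subset_cons _ (List.subset_cons_self _ _))⟩

mutual
theorem RFoc.mono {Γ Γ' : Ctx} {A : PProp} (hsub : Γ ⊆ Γ') : RFoc Γ A → RFoc Γ' A
  | .idP hm => .idP (hsub hm)
  | .downR d => .downR (d.mono hsub)
  | .orR1 d => .orR1 (d.mono hsub)
  | .orR2 d => .orR2 (d.mono hsub)
  | .topR => .topR
  | .andR d e => .andR (d.mono hsub) (e.mono hsub)

theorem Inv.mono {Γ Γ' : Ctx} {Ω : List PProp} {U : Succ} (hsub : Γ ⊆ Γ') :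
    Inv Γ Ω U → Inv Γ' Ω U
  | .focR d => .focR (d.mono hsub)
  | .focL hm hst d => .focL (hsub hm) hst (d.mono hsub)
  | .etaP d => .etaP (d.mono (List.cons_subset_cons _ hsub))
  | .downL d => .downL (d.mono (List.cons_subset_cons _ hsub))
  | .botL => .botL
  | .orL d e => .orL (d.mono hsub) (e.mono hsub)
  | .topPL d => .topPL (d.mono hsub)
  | .andPL d => .andPL (d.mono hsub)
  | .etaN d => .etaN (d.mono hsub)
  | .upR d => .upR (d.mono hsub)
  | .impR d => .impR (d.mono hsub)
  | .topNR => .topNR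
  | .andNR d e => .andNR (d.mono hsub) (e.mono hsub)

theorem LFoc.mono {Γ Γ' : Ctx} {A : NProp} {U : Succ} (hsub : Γ ⊆ Γ') :
    LFoc Γ A U → LFoc Γ' A U
  | .idN => .idN
  | .upL d => .upL (d.mono hsub)
  | .impL d e => .impL (d.mono hsub) (e.mono hsub)
  | .andL1 d => .andL1 (d.mono hsub)
  | .andL2 d => .andL2 (d.mono hsub)
end

theorem Inv.susp_of_neg_atom {Γ : Ctx} {p : Nat} :
    Inv Γ [] (.neg (.atom p)) → Inv Γ [] (.susp (.atom p))
  | .etaN d => d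
  | .focL _ hst _ => nomatch hst

def PosPrincipalCut (A : PProp) : Prop :=
  ∀ {Γ : Ctx} {Ω : List PProp} {U : Succ}, Γ.suspNormal → U.suspNormal →
    RFoc Γ A → Inv Γ (A :: Ω) U → Inv Γ Ω U

def NegPrincipalCut (A : NProp) : Prop :=
  ∀ {Γ : Ctx} {U : Succ}, Γ.suspNormal → U.suspNormal → U.stable →
    Inv Γ [] (.neg A) → LFoc Γ A U → Inv Γ [] U

mutual
theorem Inv.left_comm_cut {A : PProp} {U : Succ} (hcut : PosPrincipalCut A) (hU : U.suspNormal)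
    (hst : U.stable) {Γ : Ctx} {Ω : List PProp} {S : Succ} (hΓ : Γ.suspNormal)
    (E : Inv Γ [A] U) : Inv Γ Ω S → S = .pos A → Inv Γ Ω U
  | .focR d, rfl => hcut hΓ hU d E
  | .focL hm _ d, hS => .focL hm hst (LFoc.left_comm_cut hcut hU hst hΓ E d hS)
  | .etaP d, hS => .etaP (Inv.left_comm_cut hcut hU hst (hΓ.cons trivial)
      (E.mono (List.subset_cons_self _ _)) d hS)
  | .downL d, hS => .downL (Inv.left_comm_cut hcut hU hst (hΓ.cons trivial)
      (E.mono (List.subset_cons_self _ _)) d hS)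
  | .botL, _ => .botL
  | .orL d e, hS => .orL (Inv.left_comm_cut hcut hU hst hΓ E d hS)
      (Inv.left_comm_cut hcut hU hst hΓ E e hS)
  | .topPL d, hS => .topPL (Inv.left_comm_cut hcut hU hst hΓ E d hS)
  | .andPL d, hS => .andPL (Inv.left_comm_cut hcut hU hst hΓ E d hS)

theorem LFoc.left_comm_cut {A : PProp} {U : Succ} (hcut : PosPrincipalCut A) (hU : U.suspNormal)
    (hst : U.stable) {Γ : Ctx} {B : NProp} {S : Succ} (hΓ : Γ.suspNormal)
    (E : Inv Γ [A] U) : LFoc Γ B S → S = .pos A → LFoc Γ B U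
  | .upL d, hS => .upL (Inv.left_comm_cut hcut hU hst hΓ E d hS)
  | .impL r d, hS => .impL r (LFoc.left_comm_cut hcut hU hst hΓ E d hS)
  | .andL1 d, hS => .andL1 (LFoc.left_comm_cut hcut hU hst hΓ E d hS)
  | .andL2 d, hS => .andL2 (LFoc.left_comm_cut hcut hU hst hΓ E d hS)
end

/- The cut hypothesis `A⁻` is tracked by `Γ' ⊆ A⁻ :: Γ` rather than kept at the head of the
context, so that the exchange forced by `etaP` and `downL` stays within the recursion. -/
mutual
theorem RFoc.right_comm_cut {A : NProp} (hcut : NegPrincipalCut A) {Γ Γ' : Ctx} {B : PProp}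
    (hΓ : Γ.suspNormal) (D : Inv Γ [] (.neg A)) (hsub : Γ' ⊆ .neg A :: Γ) :
    RFoc Γ' B → RFoc Γ B
  | .idP hm => .idP (List.mem_of_ne_of_mem (by simp) (hsub hm))
  | .downR d => .downR (Inv.right_comm_cut hcut hΓ trivial D hsub d)
  | .orR1 d => .orR1 (RFoc.right_comm_cut hcut hΓ D hsub d)
  | .orR2 d => .orR2 (RFoc.right_comm_cut hcut hΓ D hsub d)
  | .topR => .topR
  | .andR d e => .andR (RFoc.right_comm_cut hcut hΓ D hsub d)
      (RFoc.right_comm_cut hcut hΓ D hsub e)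

theorem Inv.right_comm_cut {A : NProp} (hcut : NegPrincipalCut A) {Γ Γ' : Ctx} {Ω : List PProp}
    {U : Succ} (hΓ : Γ.suspNormal) (hU : U.suspNormal) (D : Inv Γ [] (.neg A))
    (hsub : Γ' ⊆ .neg A :: Γ) : Inv Γ' Ω U → Inv Γ Ω U
  | .focR d => .focR (RFoc.right_comm_cut hcut hΓ D hsub d)
  | .focL hm hst d => by
      have d' := LFoc.right_comm_cut hcut hΓ hU D hsub d
      rcases List.mem_cons.1 (hsub hm) with h | hm
      · exact hcut hΓ hU hst D (Hyp.neg.inj h ▸ d')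
      · exact .focL hm hst d'
  | .etaP d => .etaP (Inv.right_comm_cut hcut (hΓ.cons trivial) hU
      (D.mono (List.subset_cons_self _ _)) (cons_subset_cons_swap hsub) d)
  | .downL d => .downL (Inv.right_comm_cut hcut (hΓ.cons trivial) hU
      (D.mono (List.subset_cons_self _ _)) (cons_subset_cons_swap hsub) d)
  | .botL => .botL
  | .orL d e => .orL (Inv.right_comm_cut hcut hΓ hU D hsub d)
      (Inv.right_comm_cut hcut hΓ hU D hsub e)
  | .topPL d => .topPL (Inv.right_comm_cut hcut hΓ hU D hsub d)
  | .andPL d => .andPL (Inv.right_comm_cut hcut hΓ hU D hsub d)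
  | .etaN d => .etaN (Inv.right_comm_cut hcut hΓ trivial D hsub d)
  | .upR d => .upR (Inv.right_comm_cut hcut hΓ trivial D hsub d)
  | .impR d => .impR (Inv.right_comm_cut hcut hΓ trivial D hsub d)
  | .topNR => .topNR
  | .andNR d e => .andNR (Inv.right_comm_cut hcut hΓ trivial D hsub d)
      (Inv.right_comm_cut hcut hΓ trivial D hsub e)

theorem LFoc.right_comm_cut {A : NProp} (hcut : NegPrincipalCut A) {Γ Γ' : Ctx} {B : NProp}
    {U : Succ} (hΓ : Γ.suspNormal) (hU : U.suspNormal) (D : Inv Γ [] (.neg A))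
    (hsub : Γ' ⊆ .neg A :: Γ) : LFoc Γ' B U → LFoc Γ B U
  | .idN => .idN
  | .upL d => .upL (Inv.right_comm_cut hcut hΓ hU D hsub d)
  | .impL r d => .impL (RFoc.right_comm_cut hcut hΓ D hsub r)
      (LFoc.right_comm_cut hcut hΓ hU D hsub d)
  | .andL1 d => .andL1 (LFoc.right_comm_cut hcut hΓ hU D hsub d)
  | .andL2 d => .andL2 (LFoc.right_comm_cut hcut hΓ hU D hsub d)
end

mutual
theorem PProp.principal_cut : (A : PProp) → PosPrincipalCut A
  | _, _, _, _, hΓ, _, .idP hm, e => by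
      obtain ⟨p, rfl⟩ := hΓ.exists_atom_of_susp_mem hm
      cases e with
      | etaP e => exact e.mono (List.cons_subset.2 ⟨hm, List.Subset.refl _⟩)
  | .down B, _, _, _, hΓ, hU, .downR d, .downL e =>
      Inv.right_comm_cut (NProp.principal_cut B) hΓ hU d (List.Subset.refl _) e
  | .or B _, _, _, _, hΓ, hU, .orR1 d, .orL e _ => PProp.principal_cut B hΓ hU d e
  | .or _ C, _, _, _, hΓ, hU, .orR2 d, .orL _ e => PProp.principal_cut C hΓ hU d e
  | .top, _, _, _, _, _, .topR, .topPL e => e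
  | .and B C, _, _, _, hΓ, hU, .andR d₁ d₂, .andPL e =>
      PProp.principal_cut C hΓ hU d₂ (PProp.principal_cut B hΓ hU d₁ e)

theorem NProp.principal_cut : (A : NProp) → NegPrincipalCut A
  | _, _, _, _, hU, _, d, .idN => by
      obtain ⟨p, rfl⟩ := hU.exists_atom
      exact d.susp_of_neg_atom
  | .up B, _, _, hΓ, hU, hst, .upR d, .upL e =>
      Inv.left_comm_cut (PProp.principal_cut B) hU hst hΓ e d rfl
  | .imp B C, _, _, hΓ, hU, hst, .impR d, .impL r l =>
      NProp.principal_cut C hΓ hU hst (PProp.principal_cut B hΓ trivial r d) l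
  | .and B _, _, _, hΓ, hU, hst, .andNR d _, .andL1 l => NProp.principal_cut B hΓ hU hst d l
  | .and _ C, _, _, hΓ, hU, hst, .andNR _ d, .andL2 l => NProp.principal_cut C hΓ hU hst d l
  | _, _, _, _, _, _, .focL _ hst _, _ => nomatch hst
end

/-- Cut admissibility, negative principal case. -/
theorem cut_negative_principal {Γ : Ctx} {A : NProp} {U : Succ}
    (hΓ : Ctx.suspNormal Γ) (hU : Succ.suspNormal U) (hst : Succ.stable U)
    (h1 : Inv Γ [] (Succ.neg A)) (h2 : LFoc Γ A U) :
    Inv Γ [] U :=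
  NProp.principal_cut A hΓ hU hst h1 h2

end StructuralFocalization
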